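/- arXiv:2602.07224 — 4 statements merged into one kernel-verified Lean document; each statement's English description precedes it below -/
import Mathlib

section
/- For each n, the matrix W_n = [[0, D_n, 0], [-D_n, 0, γ D_n], [0, -γ D_n, -D_n^2]] (Dirichlet–Neumann modal approximation of the weakly coupled thermoelastic system) has no nonzero purely imaginary eigenvalue: if iβ with β ∈ ℝ, β ≠ 0 is an eigenvalue of W_n (viewed as a complex matrix), then the eigenvector is zero, a contradiction; hence iℝ\{0} ∩ σ(W_n) = ∅. -/
/-!
Mode by mode, `W_n` acts on `(x, y, t) ∈ ℂ³` as `[[0, d, 0], [-d, 0, γd], [0, -γd, -d²]]`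
with `d ≠ 0`: a skew-symmetric part plus the dissipation `-d²` in the thermal component.
For an eigenvalue `iβ` the real part of `⟨W v, v⟩ = iβ ‖v‖²` gives `d² |t|² = 0`, so `t = 0`;
the coupling `γ ≠ 0` then forces `y = 0`, and the middle equation forces `x = 0`.
-/

open Matrix ComplexConjugate

lemma thermoelastic_mode_eq_zero {β γ d : ℝ} (hγ : γ ≠ 0) (hd : d ≠ 0) {x y t : ℂ}
    (h₁ : d * y = β * Complex.I * x)
    (h₂ : -(d * x) + γ * d * t = β * Complex.I * y)
    (h₃ : -(γ * d * y) - d ^ 2 * t = β * Complex.I * t) :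
    x = 0 ∧ y = 0 ∧ t = 0 := by
  have energy : (conj x * (d * y) + conj y * (-(d * x) + γ * d * t)
      + conj t * (-(γ * d * y) - d ^ 2 * t)).re
      = (β * Complex.I * (conj x * x + conj y * y + conj t * t)).re := by
    rw [h₁, h₂, h₃]
    ring_nf
  have ht : t = 0 := by
    have : d ^ 2 * Complex.normSq t = 0 := by
      simp [Complex.mul_re, ← Complex.ofReal_pow] at energy
      rw [Complex.normSq_apply]
      linear_combination -energy
    simpa [hd] using this
  have hy : y = 0 := by simpa [ht, hγ, hd] using h₃
  refine ⟨?_, hy, ht⟩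
  simpa [ht, hy, hd] using h₂

section ModalMatrix

variable {ι R : Type*} [Fintype ι] [DecidableEq ι] [CommRing R]

def thermoelasticModalMatrix (γ : R) (D : Matrix ι ι R) :
    Matrix ((ι ⊕ ι) ⊕ ι) ((ι ⊕ ι) ⊕ ι) R :=
  fromBlocks (fromBlocks 0 D (-D) 0) (fromRows 0 (γ • D)) (fromCols 0 (-(γ • D))) (-(D * D))

variable (γ : R) (d : ι → R) (z : (ι ⊕ ι) ⊕ ι → R) (j : ι)

lemma thermoelasticModalMatrix_diagonal_mulVec_inl_inl :
    (thermoelasticModalMatrix γ (diagonal d) *ᵥ z) (.inl (.inl j)) = d j * z (.inl (.inr j)) := by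
  simp [thermoelasticModalMatrix, mulVec, dotProduct, Fintype.sum_sum_type, fromBlocks, diagonal]

lemma thermoelasticModalMatrix_diagonal_mulVec_inl_inr :
    (thermoelasticModalMatrix γ (diagonal d) *ᵥ z) (.inl (.inr j)) =
      -(d j * z (.inl (.inl j))) + γ * d j * z (.inr j) := by
  simp [thermoelasticModalMatrix, mulVec, dotProduct, Fintype.sum_sum_type, fromBlocks, diagonal,
    mul_assoc]

lemma thermoelasticModalMatrix_diagonal_mulVec_inr :
    (thermoelasticModalMatrix γ (diagonal d) *ᵥ z) (.inr j) =
      -(γ * d j * z (.inl (.inr j))) - d j ^ 2 * z (.inr j) := by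
  simp [thermoelasticModalMatrix, mulVec, dotProduct, Fintype.sum_sum_type, fromBlocks,
    diagonal_mul_diagonal, diagonal_apply, sq, mul_assoc]
  ring

end ModalMatrix

theorem thermoelasticModalMatrix_diagonal_eigenvector_eq_zero {ι : Type*} [Fintype ι]
    [DecidableEq ι] {β γ : ℝ} (hγ : γ ≠ 0) {d : ι → ℝ} (hd : ∀ j, d j ≠ 0)
    {z : (ι ⊕ ι) ⊕ ι → ℂ}
    (hz : thermoelasticModalMatrix (γ : ℂ) (diagonal fun j => (d j : ℂ)) *ᵥ z
      = ((β : ℂ) * Complex.I) • z) :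
    z = 0 := by
  have hmode (j : ι) := thermoelastic_mode_eq_zero hγ (hd j)
    ((thermoelasticModalMatrix_diagonal_mulVec_inl_inl _ _ z j).symm.trans (congrFun hz _))
    ((thermoelasticModalMatrix_diagonal_mulVec_inl_inr _ _ z j).symm.trans (congrFun hz _))
    ((thermoelasticModalMatrix_diagonal_mulVec_inr _ _ z j).symm.trans (congrFun hz _))
  funext k
  rcases k with (j | j) | j
  exacts [(hmode j).1, (hmode j).2.1, (hmode j).2.2]

/-- The Dirichlet–Neumann modal matrix `W_n = [[0,D],[-D,0,γD],[0,-γD,-D²]]`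
(as a complex matrix) has no nonzero purely imaginary eigenvalue. -/
theorem stmt_10 (n : ℕ) (γ : ℝ) (hγ : γ ≠ 0)
    (D : Matrix (Fin n) (Fin n) ℂ)
    (hD : D = Matrix.diagonal fun j : Fin n => ((j : ℕ) : ℂ) + 1)
    (W : Matrix ((Fin n ⊕ Fin n) ⊕ Fin n) ((Fin n ⊕ Fin n) ⊕ Fin n) ℂ)
    (hW : W = Matrix.fromBlocks
      (Matrix.fromBlocks 0 D (-D) 0)
      (Matrix.fromRows 0 ((γ : ℂ) • D))
      (Matrix.fromCols 0 (-((γ : ℂ) • D)))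
      (-(D * D))) :
    ∀ β : ℝ, β ≠ 0 →
      ¬ ∃ z : ((Fin n ⊕ Fin n) ⊕ Fin n) → ℂ,
          z ≠ 0 ∧ W.mulVec z = ((β : ℂ) * Complex.I) • z := by
  rintro β - ⟨z, hz, hWz⟩
  have hD' : D = diagonal fun j : Fin n => (((j : ℕ) + 1 : ℝ) : ℂ) := by
    rw [hD]
    push_cast
    rfl
  rw [hW, hD'] at hWz
  exact hz (thermoelasticModalMatrix_diagonal_eigenvector_eq_zero hγ (fun j => by positivity) hWz)
end

section
/- If iβ (β ∈ ℝ, β ≠ 0) were an eigenvalue of the dissipative block matrix W_n = [[0, D_n, 0], [-D_n, 0, -γI_n], [0, γI_n, -D_n^2]] with unit eigenvector z = (u,v,θ) ∈ ℂ^{3n}, then D_n θ = 0 and hence θ = 0, which forces v = 0 and u = 0; therefore W_n has no purely imaginary eigenvalues other than possibly 0, and in fact 0 is not an eigenvalue either, so iℝ ⊂ ρ(W_n). -/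
/-!
For `z = (u, v, θ)` the block matrix `W` is dissipative: `Re ⟪z, W z⟫ = -‖D θ‖²`, since the
couplings through `D` and `γ` are skew-adjoint and contribute only imaginary terms. If
`W z = μ z` with `μ` purely imaginary, the left side vanishes, so `D θ = 0` and hence `θ = 0`;
the third block row then reads `γ v = 0` and the second `D u = 0`, so `z = 0`.
-/

open Matrix
open scoped ComplexOrder

namespace Matrix

variable {m : Type*} [Fintype m]

theorem IsHermitian.star_dotProduct_mulVec {α : Type*} [NonUnitalSemiring α] [StarRing α]
    {D : Matrix m m α} (hD : D.IsHermitian) (u v : m → α) :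
    star v ⬝ᵥ (D *ᵥ u) = star (star u ⬝ᵥ (D *ᵥ v)) := by
  rw [star_dotProduct, star_mulVec, ← dotProduct_mulVec, hD.eq]

theorem im_dotProduct_star_self (v : m → ℂ) : (star v ⬝ᵥ v).im = 0 :=
  (Complex.nonneg_iff.mp (dotProduct_star_self_nonneg v)).2.symm

theorem re_dotProduct_star_self_eq_zero {v : m → ℂ} : (star v ⬝ᵥ v).re = 0 ↔ v = 0 := by
  rw [← dotProduct_star_self_eq_zero]
  exact ⟨fun h => Complex.ext h (im_dotProduct_star_self v), fun h => by rw [h, Complex.zero_re]⟩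

variable [DecidableEq m]

def dissipativeBlock (D : Matrix m m ℂ) (γ : ℝ) : Matrix ((m ⊕ m) ⊕ m) ((m ⊕ m) ⊕ m) ℂ :=
  fromBlocks (fromBlocks 0 D (-D) 0) (fromRows 0 (-((γ : ℂ) • (1 : Matrix m m ℂ))))
    (fromCols 0 ((γ : ℂ) • (1 : Matrix m m ℂ))) (-(D * D))

theorem dissipativeBlock_mulVec (D : Matrix m m ℂ) (γ : ℝ) (u v θ : m → ℂ) :
    dissipativeBlock D γ *ᵥ Sum.elim (Sum.elim u v) θ =
      Sum.elim (Sum.elim (D *ᵥ v) (-(D *ᵥ u) - (γ : ℂ) • θ)) ((γ : ℂ) • v - D *ᵥ (D *ᵥ θ)) := by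
  simp only [dissipativeBlock, fromBlocks_mulVec, fromRows_mulVec, Sum.elim_comp_inl,
    Sum.elim_comp_inr, fromCols_mulVec_sumElim, zero_mulVec, neg_mulVec, smul_mulVec, one_mulVec,
    mulVec_mulVec]
  ext ((j | j) | j) <;> simp [sub_eq_add_neg]

theorem re_star_dotProduct_dissipativeBlock_mulVec {D : Matrix m m ℂ} (hD : D.IsHermitian)
    (γ : ℝ) (z : (m ⊕ m) ⊕ m → ℂ) :
    (star z ⬝ᵥ (dissipativeBlock D γ *ᵥ z)).re =
      -(star (D *ᵥ (z ∘ Sum.inr)) ⬝ᵥ (D *ᵥ (z ∘ Sum.inr))).re := by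
  set u := z ∘ Sum.inl ∘ Sum.inl
  set v := z ∘ Sum.inl ∘ Sum.inr
  set θ := z ∘ Sum.inr
  have hz : z = Sum.elim (Sum.elim u v) θ := by ext ((j | j) | j) <;> rfl
  rw [hz, dissipativeBlock_mulVec]
  simp only [Function.star_sumElim, sumElim_dotProduct_sumElim, dotProduct_sub, dotProduct_neg,
    dotProduct_smul, hD.star_dotProduct_mulVec u v]
  rw [star_dotProduct θ v, hD.star_dotProduct_mulVec (D *ᵥ θ) θ]
  simp only [Complex.star_def, smul_eq_mul, Complex.add_re, Complex.sub_re, Complex.neg_re,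
    Complex.mul_re, Complex.conj_re, Complex.conj_im, Complex.ofReal_re, Complex.ofReal_im]
  ring

theorem eq_zero_of_dissipativeBlock_mulVec_eq_smul {D : Matrix m m ℂ} (hD : D.IsHermitian)
    (hdet : D.det ≠ 0) {γ : ℝ} (hγ : γ ≠ 0) {μ : ℂ} (hμ : μ.re = 0) {z : (m ⊕ m) ⊕ m → ℂ}
    (hz : dissipativeBlock D γ *ᵥ z = μ • z) : z = 0 := by
  set u := z ∘ Sum.inl ∘ Sum.inl
  set v := z ∘ Sum.inl ∘ Sum.inr
  set θ := z ∘ Sum.inr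
  have hz_elim : z = Sum.elim (Sum.elim u v) θ := by ext ((j | j) | j) <;> rfl
  have hDθ : D *ᵥ θ = 0 := by
    rw [← re_dotProduct_star_self_eq_zero, ← neg_eq_zero,
      ← re_star_dotProduct_dissipativeBlock_mulVec hD, hz, dotProduct_smul, smul_eq_mul,
      Complex.mul_re, hμ, im_dotProduct_star_self, zero_mul, mul_zero, sub_zero]
  have hθ : θ = 0 := eq_zero_of_mulVec_eq_zero hdet hDθ
  rw [hz_elim, dissipativeBlock_mulVec, hθ] at hz
  have hv : v = 0 := funext fun j => by simpa [hγ] using congrFun hz (Sum.inr j)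
  have hDu : D *ᵥ u = 0 := funext fun j => by
    simpa [hv] using congrFun hz (Sum.inl (Sum.inr j))
  have hu : u = 0 := eq_zero_of_mulVec_eq_zero hdet hDu
  rw [hz_elim, hu, hv, hθ, Sum.elim_zero_zero, Sum.elim_zero_zero]

theorem isUnit_smul_one_sub_dissipativeBlock {D : Matrix m m ℂ} (hD : D.IsHermitian)
    (hdet : D.det ≠ 0) {γ : ℝ} (hγ : γ ≠ 0) {μ : ℂ} (hμ : μ.re = 0) :
    IsUnit (μ • (1 : Matrix ((m ⊕ m) ⊕ m) ((m ⊕ m) ⊕ m) ℂ) - dissipativeBlock D γ) := by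
  rw [isUnit_iff_isUnit_det, isUnit_iff_ne_zero, Ne, ← exists_mulVec_eq_zero_iff]
  rintro ⟨z, hz0, hz⟩
  rw [sub_mulVec, smul_mulVec, one_mulVec, sub_eq_zero] at hz
  exact hz0 (eq_zero_of_dissipativeBlock_mulVec_eq_smul hD hdet hγ hμ hz.symm)

end Matrix

/-- For the dissipative block matrix `W_n = [[0,D],[-D,0,-γI],[0,γI,-D²]]`
with `D = diag(1,…,n)` and `γ ≠ 0`, the whole imaginary axis lies in the
resolvent set: `iβ I - W_n` is invertible for every `β ∈ ℝ`. -/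
theorem stmt_11 (n : ℕ) (γ : ℝ) (hγ : γ ≠ 0)
    (D : Matrix (Fin n) (Fin n) ℂ)
    (hD : D = Matrix.diagonal fun j : Fin n => ((j : ℕ) : ℂ) + 1)
    (W : Matrix ((Fin n ⊕ Fin n) ⊕ Fin n) ((Fin n ⊕ Fin n) ⊕ Fin n) ℂ)
    (hW : W = Matrix.fromBlocks
      (Matrix.fromBlocks 0 D (-D) 0)
      (Matrix.fromRows 0 (-((γ : ℂ) • (1 : Matrix (Fin n) (Fin n) ℂ))))
      (Matrix.fromCols 0 ((γ : ℂ) • (1 : Matrix (Fin n) (Fin n) ℂ)))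
      (-(D * D))) :
    ∀ β : ℝ,
      IsUnit (((β : ℂ) * Complex.I) •
        (1 : Matrix ((Fin n ⊕ Fin n) ⊕ Fin n) ((Fin n ⊕ Fin n) ⊕ Fin n) ℂ) - W) := by
  intro β
  have hD_herm : D.IsHermitian := hD ▸ isHermitian_diagonal_of_self_adjoint _ (by ext j; simp)
  have hD_det : D.det ≠ 0 := by
    rw [hD, det_diagonal]
    exact Finset.prod_ne_zero_iff.mpr fun j _ => Nat.cast_add_one_ne_zero j
  exact hW ▸ isUnit_smul_one_sub_dissipativeBlock hD_herm hD_det hγ (by simp)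
end

section
/- The matrix W_n = [[0, D_n, 0], [-D_n, 0, γD_n], [0, -γD_n, -D_n^2]] with D_n = diag(1,…,n) is invertible, and its inverse satisfies the uniform bound ‖W_n^{-1}‖_∞ ≤ γ^2 + γ + 1, independent of n. -/
/-!
With `E = D⁻¹`, block multiplication shows that `W` has the inverse
`[[-γ²E², -E, -γE²], [E, 0, 0], [-γE², 0, -E²]]`, whose blocks are polynomials in `E`.
For `D = diag(1, …, n)` the absolute row sums of `W⁻¹` are `γ²/k² + 1/k + γ/k²`, `1/k` and
`γ/k² + 1/k²` with `1 ≤ k ≤ n`, all at most `γ² + γ + 1`.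
-/

open Matrix

namespace Matrix

variable {m₁ m₂ n₁ n₂ m n α : Type*}

theorem fromRows_add [Add α] (A₁ B₁ : Matrix m₁ n α) (A₂ B₂ : Matrix m₂ n α) :
    fromRows A₁ A₂ + fromRows B₁ B₂ = fromRows (A₁ + B₁) (A₂ + B₂) := by
  ext (i | i) j <;> rfl

theorem fromCols_add [Add α] (A₁ B₁ : Matrix m n₁ α) (A₂ B₂ : Matrix m n₂ α) :
    fromCols A₁ A₂ + fromCols B₁ B₂ = fromCols (A₁ + B₁) (A₂ + B₂) := by
  ext i (j | j) <;> rfl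

theorem sum_abs_diagonal_apply [Fintype n] [DecidableEq n] [AddCommGroup α] [Lattice α]
    [AddLeftMono α] (f : n → α) (i : n) : ∑ j, |diagonal f i j| = |f i| := by
  simp [diagonal_apply, apply_ite]

end Matrix

section BlockW

variable {ι R : Type*} [Fintype ι] [DecidableEq ι] [CommRing R]

def blockW (γ : R) (D : Matrix ι ι R) : Matrix ((ι ⊕ ι) ⊕ ι) ((ι ⊕ ι) ⊕ ι) R :=
  fromBlocks (fromBlocks 0 D (-D) 0) (fromRows 0 (γ • D)) (fromCols 0 (-(γ • D))) (-(D * D))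

def blockWInv (γ : R) (E : Matrix ι ι R) : Matrix ((ι ⊕ ι) ⊕ ι) ((ι ⊕ ι) ⊕ ι) R :=
  fromBlocks (fromBlocks (-(γ ^ 2 • (E * E))) (-E) E 0) (fromRows (-(γ • (E * E))) 0)
    (fromCols (-(γ • (E * E))) 0) (-(E * E))

theorem blockW_mul_blockWInv {γ : R} {D E : Matrix ι ι R} (h : D * E = 1) :
    blockW γ D * blockWInv γ E = 1 := by
  have hDEE : D * (E * E) = E := by rw [← Matrix.mul_assoc, h, Matrix.one_mul]
  have hDDEE : D * D * (E * E) = 1 := by rw [Matrix.mul_assoc, hDEE, h]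
  rw [blockW, blockWInv, fromBlocks_multiply, fromBlocks_multiply, fromRows_mul_fromCols,
    fromBlocks_mul_fromRows, fromCols_mul_fromBlocks, mul_fromCols, fromRows_mul,
    fromCols_mul_fromRows]
  simp [h, hDEE, hDDEE, fromBlocks_add, fromRows_add, fromCols_add, ← fromBlocks_one,
    ← fromRows_zero, ← fromCols_zero, smul_smul, pow_two]

theorem sum_abs_blockWInv_diagonal_le [LinearOrder R] [IsStrictOrderedRing R]
    {γ : R} (hγ : 0 ≤ γ) {e : ι → R} (he₀ : ∀ j, 0 ≤ e j) (he₁ : ∀ j, e j ≤ 1)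
    (i : (ι ⊕ ι) ⊕ ι) : ∑ j, |blockWInv γ (diagonal e) i j| ≤ γ ^ 2 + γ + 1 := by
  have hee : ∀ j, e j * e j ≤ 1 := fun j => mul_le_one₀ (he₁ j) (he₀ j) (he₁ j)
  rcases i with (i | i) | i <;>
    simp [blockWInv, Fintype.sum_sum_type, diagonal_mul_diagonal, ← diagonal_smul,
      sum_abs_diagonal_apply, abs_mul, abs_of_nonneg, hγ, he₀]
  all_goals nlinarith [hee i, he₁ i, sq_nonneg γ, mul_le_mul_of_nonneg_left (hee i) hγ,
    mul_le_mul_of_nonneg_left (hee i) (sq_nonneg γ)]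

end BlockW

/-- The matrix `W_n = [[0,D],[-D,0,γD],[0,-γD,-D²]]`, `D = diag(1,…,n)`,
is invertible and its inverse satisfies the uniform max-row-sum bound
`‖W_n⁻¹‖_∞ ≤ γ² + γ + 1`, independently of `n`. -/
theorem stmt_12 (n : ℕ) (γ : ℝ) (hγ : 0 < γ)
    (D : Matrix (Fin n) (Fin n) ℝ)
    (hD : D = Matrix.diagonal fun j : Fin n => ((j : ℕ) : ℝ) + 1)
    (W : Matrix ((Fin n ⊕ Fin n) ⊕ Fin n) ((Fin n ⊕ Fin n) ⊕ Fin n) ℝ)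
    (hW : W = Matrix.fromBlocks
      (Matrix.fromBlocks 0 D (-D) 0)
      (Matrix.fromRows 0 (γ • D))
      (Matrix.fromCols 0 (-(γ • D)))
      (-(D * D))) :
    IsUnit W ∧ ∀ i, ∑ j, |W⁻¹ i j| ≤ γ ^ 2 + γ + 1 := by
  set d : Fin n → ℝ := fun j => (j : ℝ) + 1
  have hd : ∀ j, 1 ≤ d j := fun j => le_add_of_nonneg_left (Nat.cast_nonneg _)
  have hDE : D * diagonal d⁻¹ = 1 := by
    rw [hD, diagonal_mul_diagonal, ← diagonal_one]
    exact congrArg diagonal (funext fun j => mul_inv_cancel₀ (by linarith [hd j]))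
  have hWV : W * blockWInv γ (diagonal d⁻¹) = 1 := hW ▸ blockW_mul_blockWInv hDE
  refine ⟨IsUnit.of_mul_eq_one _ hWV, fun i => ?_⟩
  rw [inv_eq_right_inv hWV]
  exact sum_abs_blockWInv_diagonal_le hγ.le (fun j => inv_nonneg.2 (by linarith [hd j]))
    (fun j => inv_le_one_of_one_le₀ (hd j)) i
end

section
/- The 4×4 determinant with rows (a, -a, b, -b), (a e^{aπ}, -a e^{-aπ}, b e^{bπ}, -b e^{-bπ}), (l, -l, m, -m), (l e^{aπ}, -l e^{-aπ}, m e^{bπ}, -m e^{-bπ}) factors as (am - bl)^2 · (e^{(a+b)π} + e^{-(a+b)π} - e^{(a-b)π} - e^{(b-a)π}) up to a nonzero constant; in particular it vanishes if and only if am = bl or cosh((a+b)π) = cosh((a-b)π). -/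
/-!
Reordering rows and columns as (1, 3, 2, 4) turns the matrix into
`[[C, -C], [C D, -C D']]` with `C = [[a, b], [l, m]]`, `D = diag(e^{aπ}, e^{bπ})` and
`D' = diag(e^{-aπ}, e^{-bπ})`; factoring out `diag(C, C)` leaves `[[1, -1], [D, -D']]`,
whose determinant is `det (D - D') = (e^{aπ} - e^{-aπ}) (e^{bπ} - e^{-bπ})`.
Expanded, this product is `2 (cosh((a+b)π) - cosh((a-b)π))`.
-/

open Complex

lemma Matrix.det_neumann_neumann {R : Type*} [CommRing R] (a b l m x x' y y' : R) :
    Matrix.det !![a, -a, b, -b;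
        a * x, -(a * x'), b * y, -(b * y');
        l, -l, m, -m;
        l * x, -(l * x'), m * y, -(m * y')]
      = (a * m - b * l) ^ 2 * ((x - x') * (y - y')) := by
  rw [Matrix.det_succ_row_zero]
  simp only [Nat.succ_eq_add_one, Nat.reduceAdd, Fin.isValue, Matrix.of_apply, Matrix.cons_val',
    Matrix.cons_val_fin_one, Matrix.cons_val_zero, Matrix.det_fin_three, Matrix.submatrix_apply,
    Fin.succ_zero_eq_one, Fin.succAbove, Fin.castSucc_zero, Matrix.cons_val_one, Fin.succ_one_eq_two,
    Fin.castSucc_one, Matrix.cons_val, Fin.reduceSucc, Fin.reduceCastSucc, Fin.sum_univ_succ,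
    Fin.coe_ofNat_eq_mod, Nat.zero_mod, pow_zero, one_mul, lt_self_iff_false, reduceIte, not_lt_zero,
    neg_mul, mul_neg, neg_neg, Fin.val_succ, Matrix.cons_val_succ, Fin.succ_pos, zero_add, pow_one,
    Fin.lt_one_iff, Fin.reduceEq, sub_neg_eq_add, even_two, Even.neg_pow, one_pow, Fin.reduceLT,
    Finset.univ_unique, Fin.default_eq_zero, Fin.val_eq_zero, Finset.sum_neg_distrib,
    Finset.sum_singleton]
  ring

lemma Complex.exp_sub_exp_neg_mul_exp_sub_exp_neg (z w : ℂ) :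
    (exp z - exp (-z)) * (exp w - exp (-w))
      = exp (z + w) + exp (-(z + w)) - exp (z - w) - exp (w - z) := by
  simp only [exp_add, exp_sub, exp_neg]
  field_simp
  ring

lemma Complex.exp_sum_eq_two_mul_cosh_sub_cosh (z w : ℂ) :
    exp (z + w) + exp (-(z + w)) - exp (z - w) - exp (w - z)
      = 2 * (cosh (z + w) - cosh (z - w)) := by
  rw [mul_sub, two_cosh, two_cosh, neg_sub]
  ring

/-- The Neumann–Neumann characteristic determinant factors as
`(am - bl)² (e^{(a+b)π} + e^{-(a+b)π} - e^{(a-b)π} - e^{(b-a)π})`; in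
particular it vanishes iff `am = bl` or `cosh((a+b)π) = cosh((a-b)π)`. -/
theorem stmt_17 (a b l m : ℂ) :
    Matrix.det
      !![a, -a, b, -b;
         a * Complex.exp (a * Real.pi), -(a * Complex.exp (-(a * Real.pi))),
           b * Complex.exp (b * Real.pi), -(b * Complex.exp (-(b * Real.pi)));
         l, -l, m, -m;
         l * Complex.exp (a * Real.pi), -(l * Complex.exp (-(a * Real.pi))),
           m * Complex.exp (b * Real.pi), -(m * Complex.exp (-(b * Real.pi)))]
      = (a * m - b * l) ^ 2 *
        (Complex.exp ((a + b) * Real.pi) + Complex.exp (-((a + b) * Real.pi))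
          - Complex.exp ((a - b) * Real.pi) - Complex.exp ((b - a) * Real.pi))
    ∧ (Matrix.det
      !![a, -a, b, -b;
         a * Complex.exp (a * Real.pi), -(a * Complex.exp (-(a * Real.pi))),
           b * Complex.exp (b * Real.pi), -(b * Complex.exp (-(b * Real.pi)));
         l, -l, m, -m;
         l * Complex.exp (a * Real.pi), -(l * Complex.exp (-(a * Real.pi))),
           m * Complex.exp (b * Real.pi), -(m * Complex.exp (-(b * Real.pi)))] = 0
      ↔ a * m = b * l ∨
        Complex.cosh ((a + b) * Real.pi) = Complex.cosh ((a - b) * Real.pi)) := by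
  have hdet := Matrix.det_neumann_neumann a b l m (exp (a * Real.pi)) (exp (-(a * Real.pi)))
    (exp (b * Real.pi)) (exp (-(b * Real.pi)))
  rw [exp_sub_exp_neg_mul_exp_sub_exp_neg] at hdet
  simp only [add_mul, sub_mul]
  refine ⟨hdet, ?_⟩
  rw [hdet, exp_sum_eq_two_mul_cosh_sub_cosh]
  simp only [mul_eq_zero, pow_eq_zero_iff two_ne_zero, two_ne_zero, false_or, sub_eq_zero]
end
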